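/- arXiv:2304.14074 — 2 statements merged into one kernel-verified Lean document; each statement's English description precedes it below -/
import Mathlib

section
/- (Stability of NPA-II.) Let q ≥ 1 be a natural number, let the coarse propagator be 𝒢(U) = P_3^q·U, and let ℱ : ℝ^m → ℝ^m be a map and C ≥ 0 a constant such that ‖ℱ(U) − P_3^q·U‖ ≤ C·ΔT²·‖U‖ for every U ∈ ℝ^m. Let u⁰ ∈ ℝ^m and let (U_n^k)_{n,k≥0} satisfy U_0^k = u⁰ for all k and U_{n+1}^{k+1} = P_3^q·U_n^{k+1} + ℱ(U_n^k) − P_3^q·U_n^k for all n, k ≥ 0. Then for every n and k, ‖U_{n+1}^{k+1}‖ ≤ ‖u⁰‖ + C·(n+1)·ΔT²·max_{0≤j≤n} ‖U_j^k‖. -/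
/-- The m×m discrete Dirichlet Laplacian with mesh size `h`. -/
noncomputable def Dh (m : ℕ) (h : ℝ) : Matrix (Fin m) (Fin m) ℝ :=
  Matrix.of fun i j =>
    if (i : ℕ) = (j : ℕ) then 1 / h ^ 2 * (-2)
    else if (i : ℕ) + 1 = (j : ℕ) ∨ (j : ℕ) + 1 = (i : ℕ) then 1 / h ^ 2 * 1
    else 0

/-- `Pmat m h ΔT ε i = (I − iΔT·D_h + ε²ΔT·D_h²)⁻¹ (I − iΔT·D_h)`. -/
noncomputable def Pmat (m : ℕ) (h ΔT ε : ℝ) (i : ℕ) : Matrix (Fin m) (Fin m) ℝ :=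
  ((1 : Matrix (Fin m) (Fin m) ℝ) - ((i : ℝ) * ΔT) • Dh m h
      + (ε ^ 2 * ΔT) • Dh m h ^ 2)⁻¹
    * ((1 : Matrix (Fin m) (Fin m) ℝ) - ((i : ℝ) * ΔT) • Dh m h)

/-- `PJmat m h ΔT ε J i = [(I − (iΔT/J)·D_h + ε²(ΔT/J)·D_h²)⁻¹ (I − (iΔT/J)·D_h)]^J`. -/
noncomputable def PJmat (m : ℕ) (h ΔT ε : ℝ) (J i : ℕ) : Matrix (Fin m) (Fin m) ℝ :=
  (((1 : Matrix (Fin m) (Fin m) ℝ) - ((i : ℝ) * ΔT / (J : ℝ)) • Dh m h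
      + (ε ^ 2 * (ΔT / (J : ℝ))) • Dh m h ^ 2)⁻¹
    * ((1 : Matrix (Fin m) (Fin m) ℝ) - ((i : ℝ) * ΔT / (J : ℝ)) • Dh m h)) ^ J

/-- The action of a matrix on `EuclideanSpace ℝ (Fin m)` (i.e. `ℝ^m` with the
Euclidean norm), given by matrix-vector multiplication. -/
noncomputable def act {m : ℕ} (A : Matrix (Fin m) (Fin m) ℝ)
    (U : EuclideanSpace ℝ (Fin m)) : EuclideanSpace ℝ (Fin m) :=
  Matrix.toEuclideanCLM (𝕜 := ℝ) A U

/-- The operator (spectral) norm of a matrix, induced by the Euclidean norm. -/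
noncomputable def opNorm {m : ℕ} (A : Matrix (Fin m) (Fin m) ℝ) : ℝ :=
  ‖Matrix.toEuclideanCLM (𝕜 := ℝ) A‖

/-! Gershgorin's theorem shows that `-D_h`, being symmetric and weakly diagonally dominant with
nonnegative diagonal, is positive semidefinite. For a positive operator `L` and `c, d ≥ 0`,
`‖(1 + cL)y‖ ≤ ‖(1 + cL + dL²)y‖`, because the cross term `⟪(1 + cL)y, L²y⟫ = ‖Ly‖² + c⟪Ly, L(Ly)⟫`
is nonnegative. Since the two factors commute, `P₃ = (1 + cL + dL²)⁻¹(1 + cL)` with `L = -D_h`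
is therefore a contraction, and so is `P₃^q`. The parareal update then gives
`‖U_{n+1}^{k+1}‖ ≤ ‖U_n^{k+1}‖ + CΔT²‖U_n^k‖`, which telescopes down to `U_0^{k+1} = u⁰`. -/

theorem Matrix.posSemidef_of_sum_abs_le_diag {n : Type*} [Fintype n] [DecidableEq n]
    {A : Matrix n n ℝ} (hA : A.IsHermitian)
    (hdom : ∀ k, ∑ j ∈ Finset.univ.erase k, |A k j| ≤ A k k) : A.PosSemidef := by
  refine hA.posSemidef_iff_eigenvalues_nonneg.mpr fun i => ?_
  have hμ : Module.End.HasEigenvalue (Matrix.toLin' A) (hA.eigenvalues i) := by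
    rw [Module.End.hasEigenvalue_iff_mem_spectrum, Matrix.spectrum_toLin']
    exact hA.eigenvalues_mem_spectrum_real i
  obtain ⟨k, hk⟩ := eigenvalue_mem_ball hμ
  rw [Metric.mem_closedBall, Real.dist_eq] at hk
  simp only [Real.norm_eq_abs] at hk
  rw [Pi.zero_apply]
  linarith [neg_abs_le (hA.eigenvalues i - A k k), hdom k]

theorem Fintype.sum_ite_le_of_subsingleton {ι : Type*} [Fintype ι] (p : ι → Prop)
    [DecidablePred p] (hp : {i | p i}.Subsingleton) {c : ℝ} (hc : 0 ≤ c) :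
    ∑ i, (if p i then c else 0) ≤ c := by
  rw [Finset.sum_ite, Finset.sum_const_zero, add_zero, Finset.sum_const, nsmul_eq_mul]
  refine mul_le_of_le_one_left hc ?_
  exact_mod_cast Finset.card_le_one.mpr fun a ha b hb =>
    hp (Finset.mem_filter.mp ha).2 (Finset.mem_filter.mp hb).2

theorem isHermitian_neg_Dh (m : ℕ) (h : ℝ) : (-Dh m h).IsHermitian := by
  refine Matrix.IsHermitian.neg ?_
  ext i j
  simp only [Matrix.conjTranspose_apply, star_trivial, Dh, Matrix.of_apply]
  split_ifs <;> first | rfl | omega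

theorem posSemidef_neg_Dh (m : ℕ) (h : ℝ) : (-Dh m h).PosSemidef := by
  refine Matrix.posSemidef_of_sum_abs_le_diag (isHermitian_neg_Dh m h) fun k => ?_
  have hh : 0 ≤ 1 / h ^ 2 := by positivity
  have hterm : ∀ j ∈ Finset.univ.erase k, |(-Dh m h) k j| ≤
      (if (k : ℕ) + 1 = j then 1 / h ^ 2 else 0) + (if (j : ℕ) + 1 = k then 1 / h ^ 2 else 0) := by
    intro j hj
    have hjk : (k : ℕ) ≠ j := fun e => (Finset.mem_erase.mp hj).1 (Fin.ext e).symm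
    simp only [Matrix.neg_apply, Dh, Matrix.of_apply, if_neg hjk, abs_neg]
    split_ifs <;> first | omega | simp
  calc ∑ j ∈ Finset.univ.erase k, |(-Dh m h) k j|
      ≤ ∑ j : Fin m, ((if (k : ℕ) + 1 = j then 1 / h ^ 2 else 0)
          + (if (j : ℕ) + 1 = k then 1 / h ^ 2 else 0)) :=
        (Finset.sum_le_sum hterm).trans (Finset.sum_le_sum_of_subset_of_nonneg
          (Finset.subset_univ _) fun j _ _ => by positivity)
    _ ≤ 1 / h ^ 2 + 1 / h ^ 2 := by
        rw [Finset.sum_add_distrib]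
        gcongr
        · exact Fintype.sum_ite_le_of_subsingleton (fun j : Fin m => (k : ℕ) + 1 = j)
            (fun a ha b hb => Fin.ext (by simp only [Set.mem_ofPred_eq] at ha hb; omega)) hh
        · exact Fintype.sum_ite_le_of_subsingleton (fun j : Fin m => (j : ℕ) + 1 = k)
            (fun a ha b hb => Fin.ext (by simp only [Set.mem_ofPred_eq] at ha hb; omega)) hh
    _ = (-Dh m h) k k := by simp [Dh]; ring

theorem LinearMap.IsPositive.norm_add_smul_apply_le {E : Type*} [NormedAddCommGroup E]
    [InnerProductSpace ℝ E] {L : E →ₗ[ℝ] E} (hL : L.IsPositive) {c d : ℝ} (hc : 0 ≤ c)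
    (hd : 0 ≤ d) (y : E) : ‖y + c • L y‖ ≤ ‖y + c • L y + d • L (L y)‖ := by
  have hcross : 0 ≤ inner ℝ (y + c • L y) (L (L y)) := by
    rw [inner_add_left, real_inner_smul_left, ← hL.isSymmetric y (L y)]
    exact add_nonneg real_inner_self_nonneg (mul_nonneg hc (hL.inner_nonneg_right (L y)))
  rw [← sq_le_sq₀ (norm_nonneg _) (norm_nonneg _), norm_add_sq_real (y + c • L y),
    real_inner_smul_right]
  nlinarith [mul_nonneg hd hcross, sq_nonneg ‖d • L (L y)‖]

theorem Matrix.norm_toEuclideanCLM_inv_mul_apply_le {n : Type*} [Fintype n] [DecidableEq n]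
    {D : Matrix n n ℝ} (hD : D.PosSemidef) {c d : ℝ} (hc : 0 ≤ c) (hd : 0 ≤ d)
    (x : EuclideanSpace ℝ n) :
    ‖toEuclideanCLM (𝕜 := ℝ) ((1 + c • D + d • D ^ 2)⁻¹ * (1 + c • D)) x‖ ≤ ‖x‖ := by
  set A := 1 + c • D + d • D ^ 2
  set B := 1 + c • D
  by_cases hA : IsUnit A.det
  · obtain ⟨u, hu⟩ := A.isUnit_iff_isUnit_det.mpr hA
    have hcomm : Commute A B := by
      have hsq : Commute B (D ^ 2) :=
        (Commute.one_left _).add_left (((Commute.refl D).pow_right 2).smul_left c)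
      exact (Commute.refl B).add_left (hsq.smul_right d).symm
    set y := toEuclideanCLM (𝕜 := ℝ) A⁻¹ x
    have hAy : toEuclideanCLM (𝕜 := ℝ) A y = x := by
      rw [← mul_apply_eq_comp, ← map_mul, A.mul_nonsing_inv hA, map_one, one_apply_eq_self]
    have hBA : A⁻¹ * B = B * A⁻¹ := by
      rw [← hu, ← Matrix.coe_units_inv]
      exact (hu ▸ hcomm).units_inv_left.eq
    have hL : (toEuclideanCLM (𝕜 := ℝ) D : EuclideanSpace ℝ n →ₗ[ℝ] _).IsPositive := by
      rw [coe_toEuclideanCLM_eq_toEuclideanLin]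
      exact Matrix.isPositive_toEuclideanLin_iff.mpr hD
    calc _ = ‖toEuclideanCLM (𝕜 := ℝ) B y‖ := by rw [hBA, map_mul, mul_apply_eq_comp]
      _ ≤ ‖toEuclideanCLM (𝕜 := ℝ) A y‖ := by
        simpa [A, B, pow_two, add_smul, smul_add] using hL.norm_add_smul_apply_le hc hd y
      _ = ‖x‖ := by rw [hAy]
  · -- never the case here, but Mathlib's `A⁻¹ = 0` makes the bound trivial anyway
    simp [Matrix.nonsing_inv_apply_not_isUnit A hA]

theorem norm_toEuclideanCLM_Pmat_apply_le (m : ℕ) (h ΔT ε : ℝ) (hΔT : 0 ≤ ΔT)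
    (x : EuclideanSpace ℝ (Fin m)) :
    ‖Matrix.toEuclideanCLM (𝕜 := ℝ) (Pmat m h ΔT ε 3) x‖ ≤ ‖x‖ := by
  have hP : Pmat m h ΔT ε 3 = (1 + ((3 : ℕ) * ΔT) • -Dh m h + (ε ^ 2 * ΔT) • (-Dh m h) ^ 2)⁻¹
      * (1 + ((3 : ℕ) * ΔT) • -Dh m h) := by
    simp only [Pmat, smul_neg, neg_sq, ← sub_eq_add_neg]
  rw [hP]
  exact Matrix.norm_toEuclideanCLM_inv_mul_apply_le (posSemidef_neg_Dh m h) (by positivity)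
    (by positivity) x

theorem norm_act_Pmat_pow_le (m : ℕ) (h ΔT ε : ℝ) (hΔT : 0 ≤ ΔT) (q : ℕ)
    (x : EuclideanSpace ℝ (Fin m)) : ‖act (Pmat m h ΔT ε 3 ^ q) x‖ ≤ ‖x‖ := by
  induction q generalizing x with
  | zero => simp [act]
  | succ q ih =>
    rw [pow_succ, act, map_mul, mul_apply_eq_comp]
    exact (ih _).trans (norm_toEuclideanCLM_Pmat_apply_le m h ΔT ε hΔT x)

theorem norm_parareal_le {E : Type*} [SeminormedAddCommGroup E] {G F : E → E} {K : ℝ}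
    (hG : ∀ x, ‖G x‖ ≤ ‖x‖) (hFG : ∀ x, ‖F x - G x‖ ≤ K * ‖x‖) {u₀ : E} {U : ℕ → ℕ → E}
    (h0 : ∀ k, U 0 k = u₀)
    (hrec : ∀ n k, U (n + 1) (k + 1) = G (U n (k + 1)) + F (U n k) - G (U n k)) (n k : ℕ) :
    ‖U n (k + 1)‖ ≤ ‖u₀‖ + K * ∑ j ∈ Finset.range n, ‖U j k‖ := by
  induction n with
  | zero => simp [h0]
  | succ n ih =>
    have hstep : ‖U (n + 1) (k + 1)‖ ≤ ‖U n (k + 1)‖ + K * ‖U n k‖ := by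
      rw [hrec, add_sub_assoc]
      exact (norm_add_le _ _).trans (add_le_add (hG _) (hFG _))
    rw [Finset.sum_range_succ]
    linarith

theorem stmt17_general (h ΔT ε : ℝ) (hΔT : 0 < ΔT)
    (m : ℕ) (q : ℕ)
    (F : EuclideanSpace ℝ (Fin m) → EuclideanSpace ℝ (Fin m))
    (C : ℝ) (hC : 0 ≤ C)
    (hLTE : ∀ U, ‖F U - act (Pmat m h ΔT ε 3 ^ q) U‖ ≤ C * ΔT ^ 2 * ‖U‖)
    (u0 : EuclideanSpace ℝ (Fin m)) (U : ℕ → ℕ → EuclideanSpace ℝ (Fin m))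
    (h0 : ∀ k, U 0 k = u0)
    (hrec : ∀ n k, U (n + 1) (k + 1) =
      act (Pmat m h ΔT ε 3 ^ q) (U n (k + 1)) + F (U n k)
        - act (Pmat m h ΔT ε 3 ^ q) (U n k)) :
    ∀ n k, ‖U (n + 1) (k + 1)‖ ≤ ‖u0‖ +
      C * ((n : ℝ) + 1) * ΔT ^ 2 *
        ((Finset.range (n + 1)).sup' (Finset.nonempty_range_iff.mpr n.succ_ne_zero)
          fun j => ‖U j k‖) := by
  intro n k
  set M := (Finset.range (n + 1)).sup' (Finset.nonempty_range_iff.mpr n.succ_ne_zero)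
    fun j => ‖U j k‖
  have hsum : ∑ j ∈ Finset.range (n + 1), ‖U j k‖ ≤ ((n : ℝ) + 1) * M := by
    simpa using Finset.sum_le_card_nsmul _ _ M fun j hj => Finset.le_sup' (fun j => ‖U j k‖) hj
  calc ‖U (n + 1) (k + 1)‖ ≤ ‖u0‖ + C * ΔT ^ 2 * ∑ j ∈ Finset.range (n + 1), ‖U j k‖ :=
        norm_parareal_le (norm_act_Pmat_pow_le m h ΔT ε hΔT.le q) hLTE h0 hrec (n + 1) k
    _ ≤ ‖u0‖ + C * ΔT ^ 2 * (((n : ℝ) + 1) * M) := by gcongr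
    _ = ‖u0‖ + C * ((n : ℝ) + 1) * ΔT ^ 2 * M := by ring

theorem stmt17 (h ΔT ε : ℝ) (hh : 0 < h) (hΔT : 0 < ΔT) (hε : 0 < ε)
    (m : ℕ) (hm : 1 ≤ m) (q : ℕ) (hq : 1 ≤ q)
    (F : EuclideanSpace ℝ (Fin m) → EuclideanSpace ℝ (Fin m))
    (C : ℝ) (hC : 0 ≤ C)
    (hLTE : ∀ U, ‖F U - act (Pmat m h ΔT ε 3 ^ q) U‖ ≤ C * ΔT ^ 2 * ‖U‖)
    (u0 : EuclideanSpace ℝ (Fin m)) (U : ℕ → ℕ → EuclideanSpace ℝ (Fin m))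
    (h0 : ∀ k, U 0 k = u0)
    (hrec : ∀ n k, U (n + 1) (k + 1) =
      act (Pmat m h ΔT ε 3 ^ q) (U n (k + 1)) + F (U n k)
        - act (Pmat m h ΔT ε 3 ^ q) (U n k)) :
    ∀ n k, ‖U (n + 1) (k + 1)‖ ≤ ‖u0‖ +
      C * ((n : ℝ) + 1) * ΔT ^ 2 *
        ((Finset.range (n + 1)).sup' (Finset.nonempty_range_iff.mpr n.succ_ne_zero)
          fun j => ‖U j k‖) :=
  stmt17_general h ΔT ε hΔT m q F C hC hLTE u0 U h0 hrec
end

section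
/- (Convergence of NPA-II.) Let q ≥ 1 be a natural number, let the coarse propagator be 𝒢(U) = P_3^q·U, and let ℱ : ℝ^m → ℝ^m be a map and C₂ ≥ 0 a constant such that ‖(ℱ(U) − P_3^q·U) − (ℱ(V) − P_3^q·V)‖ ≤ C₂·ΔT²·‖U − V‖ for all U, V ∈ ℝ^m. Let N ≥ 1 be an integer, u⁰ ∈ ℝ^m, define the fine solution by U(T_0) = u⁰ and U(T_{n+1}) = ℱ(U(T_n)) for 0 ≤ n ≤ N−1, and let (U_n^k)_{0≤n≤N, k≥0} satisfy U_0^k = u⁰ for all k and U_{n+1}^{k+1} = P_3^q·U_n^{k+1} + ℱ(U_n^k) − P_3^q·U_n^k for 0 ≤ n ≤ N−1 and k ≥ 0. Set E_n^k = U(T_n) − U_n^k and β = ‖P_3‖ (so β < 1). Then for every k ≥ 0, max_{1≤j≤N} ‖E_j^{k+1}‖ ≤ (C₂·ΔT²)^{k+1} · min{ ((1 − β^{N−1})/(1 − β))^{k+1} , C(N−1, k+1) } · max_{1≤j≤N} ‖E_j^0‖, where C(·,·) denotes the binomial coefficient. -/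
/-! The error `e n k = ‖U(T_n) - U_n^k‖` satisfies
`e (n+1) (k+1) ≤ β e n (k+1) + α e n k` with `α = C₂ΔT²` and `e 0 k = 0`: the correction
step differs from the fine step by the coarse propagator applied to the difference plus the
defect of `F - 𝒢`. Any `b` with `b n 0 = 1`, `b 0 (k+1) = 0` and
`β b n (k+1) + b n k ≤ b (n+1) (k+1)` then gives `e (n+1) k ≤ αᵏ b n k max_j e j 0`;
both `b n k = C(n, k)` (Pascal's rule, as `β ≤ 1`) and `b n k = (1 + β + ⋯ + βⁿ⁻¹)ᵏ` qualify.

That `β = ‖P₃‖ < 1` comes from `P₃ = B⁻¹A` with `A = I - 3ΔT D_h`, `B = A + ε²ΔT D_h²`: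
`B² - A² = ε²ΔT D_h (2A + ε²ΔT D_h²) D_h` is positive definite because `-D_h = h⁻² LᵀL`
for the injective difference matrix `L`, so `‖P₃ x‖ = ‖A y‖ < ‖B y‖ = ‖x‖` for `x = B y ≠ 0`,
and the unit sphere is compact.
-/

theorem ContinuousLinearMap.opNorm_lt_one_of_norm_apply_lt {E : Type*} [NormedAddCommGroup E]
    [NormedSpace ℝ E] [FiniteDimensional ℝ E] (T : E →L[ℝ] E) (hT : ∀ x ≠ 0, ‖T x‖ < ‖x‖) :
    ‖T‖ < 1 := by
  cases subsingleton_or_nontrivial E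
  · simp [Subsingleton.elim T 0]
  rw [← T.sSup_sphere_eq_norm, (isCompact_sphere 0 1).sSup_lt_iff_of_continuous
    (NormedSpace.sphere_nonempty.2 zero_le_one) T.continuous.norm.continuousOn]
  intro x hx
  rw [mem_sphere_zero_iff_norm] at hx
  simpa [hx] using hT x (by rintro rfl; simp at hx)

namespace Matrix

variable {n : Type*} [Fintype n] [DecidableEq n]

theorem toEuclideanCLM_mul_apply (M N : Matrix n n ℝ) (x : EuclideanSpace ℝ n) :
    toEuclideanCLM (𝕜 := ℝ) (M * N) x =
      toEuclideanCLM (𝕜 := ℝ) M (toEuclideanCLM (𝕜 := ℝ) N x) := by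
  rw [map_mul, mul_apply_eq_comp]

theorem IsHermitian.norm_toEuclideanCLM_apply_sq {M : Matrix n n ℝ} (hM : M.IsHermitian)
    (x : EuclideanSpace ℝ n) :
    ‖toEuclideanCLM (𝕜 := ℝ) M x‖ ^ 2 = x.ofLp ⬝ᵥ (M * M) *ᵥ x.ofLp := by
  rw [← real_inner_self_eq_norm_sq, ← ContinuousLinearMap.adjoint_inner_right,
    ← ContinuousLinearMap.star_eq_adjoint, ← map_star, star_eq_conjTranspose, hM.eq,
    ← inner_toEuclideanCLM, toEuclideanCLM_mul_apply]

theorem norm_toEuclideanCLM_apply_lt {A B : Matrix n n ℝ} (hA : A.IsHermitian)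
    (hB : B.IsHermitian) (hAB : (B * B - A * A).PosDef) {x : EuclideanSpace ℝ n} (hx : x ≠ 0) :
    ‖toEuclideanCLM (𝕜 := ℝ) A x‖ < ‖toEuclideanCLM (𝕜 := ℝ) B x‖ := by
  have hpos := hAB.dotProduct_mulVec_pos (x := x.ofLp) (by simpa using hx)
  rw [star_trivial, sub_mulVec, dotProduct_sub, sub_pos, ← hA.norm_toEuclideanCLM_apply_sq,
    ← hB.norm_toEuclideanCLM_apply_sq] at hpos
  exact lt_of_pow_lt_pow_left₀ 2 (norm_nonneg _) hpos

theorem norm_toEuclideanCLM_inv_mul_lt_one {A B : Matrix n n ℝ} (hA : A.IsHermitian)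
    (hB : B.IsHermitian) (hAB : Commute A B) (hpos : (B * B - A * A).PosDef) :
    ‖toEuclideanCLM (𝕜 := ℝ) (B⁻¹ * A)‖ < 1 := by
  have hBdet : IsUnit B.det := by
    rw [← isUnit_iff_isUnit_det, ← mulVec_injective_iff_isUnit]
    refine (injective_iff_map_eq_zero (mulVecLin B)).2 fun y (hy : B *ᵥ y = 0) => ?_
    by_contra hy0
    have := norm_toEuclideanCLM_apply_lt hA hB hpos (x := WithLp.toLp 2 y) (by simpa using hy0)
    exact (norm_nonneg _).not_gt (by simpa [hy] using this)
  refine ContinuousLinearMap.opNorm_lt_one_of_norm_apply_lt _ fun x hx => ?_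
  set y := toEuclideanCLM (𝕜 := ℝ) B⁻¹ x
  have hxy : x = toEuclideanCLM (𝕜 := ℝ) B y := by
    rw [← toEuclideanCLM_mul_apply, mul_nonsing_inv _ hBdet, map_one, one_apply_eq_self]
  have hPy : toEuclideanCLM (𝕜 := ℝ) (B⁻¹ * A) x = toEuclideanCLM (𝕜 := ℝ) A y := by
    rw [hxy, ← toEuclideanCLM_mul_apply, Matrix.mul_assoc, hAB.eq, ← Matrix.mul_assoc,
      nonsing_inv_mul _ hBdet, Matrix.one_mul]
  rw [hPy, hxy]
  exact norm_toEuclideanCLM_apply_lt hA hB hpos (by rintro hy; simp [hxy, hy] at hx)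

end Matrix

section DiscreteLaplacian

open Matrix

-- `(diffMatrix m *ᵥ x) i = x i - x (i - 1)`, reading `x (-1)` and `x m` as `0`.
def diffMatrix (m : ℕ) : Matrix (Fin (m + 1)) (Fin m) ℝ :=
  of fun i j => (if i = j.castSucc then 1 else 0) - (if i = j.succ then 1 else 0)

theorem Dh_eq_smul_conjTranspose_mul_self (m : ℕ) (h : ℝ) :
    Dh m h = -(h ^ 2)⁻¹ • ((diffMatrix m)ᴴ * diffMatrix m) := by
  ext j k
  simp only [Dh, one_div, mul_neg, mul_one, of_apply, diffMatrix,
    conjTranspose_eq_transpose_of_trivial, Matrix.smul_apply, mul_apply, transpose_apply, mul_sub,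
    mul_ite, mul_zero, Finset.sum_sub_distrib, Finset.sum_ite_eq', Finset.mem_univ, ↓reduceIte,
    Fin.castSucc_inj, Fin.succ_inj, smul_eq_mul]
  simp only [Fin.ext_iff, Fin.val_castSucc, Fin.val_succ]
  split_ifs <;> first | ring1 | (exfalso; omega)

theorem diffMatrix_mulVec_injective (m : ℕ) : Function.Injective (diffMatrix m).mulVec := by
  refine (injective_iff_map_eq_zero (mulVecLin (diffMatrix m))).2 fun x (hx : _ *ᵥ x = 0) => ?_
  have hrow (k : Fin m) : x k = ∑ j, if k.castSucc = j.succ then x j else 0 := by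
    simpa [diffMatrix, mulVec, dotProduct, sub_mul, ite_mul, Finset.sum_sub_distrib, sub_eq_zero]
      using congrFun hx k.castSucc
  funext k
  induction k using WellFoundedLT.induction with
  | _ k ih =>
    rw [Pi.zero_apply, hrow, Finset.sum_eq_zero]
    intro j _
    split_ifs with hkj
    · simp only [Fin.ext_iff, Fin.val_castSucc, Fin.val_succ] at hkj
      exact ih j (by rw [Fin.lt_def]; omega)
    · rfl

theorem neg_Dh_posDef (m : ℕ) {h : ℝ} (hh : h ≠ 0) : (-Dh m h).PosDef := by
  rw [Dh_eq_smul_conjTranspose_mul_self, neg_smul, neg_neg]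
  exact (PosDef.conjTranspose_mul_self _ (diffMatrix_mulVec_injective m)).smul (by positivity)

theorem opNorm_Pmat_lt_one (m : ℕ) {h ΔT ε : ℝ} (hh : h ≠ 0) (hΔT : 0 < ΔT) (hε : ε ≠ 0)
    (i : ℕ) : opNorm (Pmat m h ΔT ε i) < 1 := by
  set D := Dh m h
  set s : ℝ := i * ΔT
  set c : ℝ := ε ^ 2 * ΔT
  have hc : 0 < c := by positivity
  have hnegD := neg_Dh_posDef m hh
  have hD : D.IsHermitian := by simpa using hnegD.1.neg
  have hDinj : Function.Injective D.mulVec :=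
    mulVec_injective_iff_isUnit.2 (by simpa using hnegD.isUnit.neg)
  set A : Matrix (Fin m) (Fin m) ℝ := 1 - s • D
  set B : Matrix (Fin m) (Fin m) ℝ := A + c • D ^ 2
  have hA : A.IsHermitian := isHermitian_one.sub (hD.smul (IsSelfAdjoint.all s))
  have hB : B.IsHermitian := hA.add ((hD.pow 2).smul (IsSelfAdjoint.all c))
  have hDA : Commute D A := (Commute.one_right D).sub_right ((Commute.refl D).smul_right s)
  have hAB : Commute A B := (Commute.refl A).add_right ((hDA.symm.pow_right 2).smul_right c)
  set M : Matrix (Fin m) (Fin m) ℝ := (2 : ℝ) • 1 + (2 * s) • -D + c • (Dᴴ * D)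
  have hM : M.PosDef :=
    ((PosDef.one.smul two_pos).add_posSemidef (hnegD.posSemidef.smul (by positivity)))
      |>.add_posSemidef ((posSemidef_conjTranspose_mul_self D).smul hc.le)
  have hBA : B * B - A * A = c • (Dᴴ * M * D) := by
    simp only [B, A, M, hD.eq]
    noncomm_ring
    module
  exact norm_toEuclideanCLM_inv_mul_lt_one hA hB hAB
    (hBA ▸ (hM.conjTranspose_mul_mul_same hDinj).smul hc)

end DiscreteLaplacian

section Recurrence

variable {e : ℕ → ℕ → ℝ} {α β : ℝ} {N : ℕ}

theorem le_pow_mul_of_recurrence {b : ℕ → ℕ → ℝ} {M : ℝ} (hα : 0 ≤ α) (hβ : 0 ≤ β)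
    (hM : 0 ≤ M) (he0 : ∀ k, e 0 k = 0) (hinit : ∀ n < N, e (n + 1) 0 ≤ M)
    (hstep : ∀ n < N, ∀ k, e (n + 1) (k + 1) ≤ β * e n (k + 1) + α * e n k)
    (hb0 : ∀ n, b n 0 = 1) (hb0' : ∀ k, b 0 (k + 1) = 0)
    (hb : ∀ n k, β * b n (k + 1) + b n k ≤ b (n + 1) (k + 1)) :
    ∀ k, ∀ n < N, e (n + 1) k ≤ α ^ k * b n k * M := by
  intro k
  induction k with
  | zero => simpa [hb0] using hinit
  | succ k ihk =>
    intro n hn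
    induction n with
    | zero => simpa [he0, hb0'] using hstep 0 hn k
    | succ n ihn =>
      calc e (n + 2) (k + 1) ≤ β * e (n + 1) (k + 1) + α * e (n + 1) k := hstep (n + 1) hn k
        _ ≤ β * (α ^ (k + 1) * b n (k + 1) * M) + α * (α ^ k * b n k * M) := by
          gcongr
          exacts [ihn (by omega), ihk n (by omega)]
        _ = α ^ (k + 1) * M * (β * b n (k + 1) + b n k) := by ring
        _ ≤ α ^ (k + 1) * M * b (n + 1) (k + 1) := by gcongr; exact hb n k
        _ = α ^ (k + 1) * b (n + 1) (k + 1) * M := by ring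

theorem le_pow_mul_choose_of_recurrence {M : ℝ} (hα : 0 ≤ α) (hβ : 0 ≤ β) (hβ1 : β ≤ 1)
    (hM : 0 ≤ M) (he0 : ∀ k, e 0 k = 0) (hinit : ∀ n < N, e (n + 1) 0 ≤ M)
    (hstep : ∀ n < N, ∀ k, e (n + 1) (k + 1) ≤ β * e n (k + 1) + α * e n k) :
    ∀ k, ∀ n < N, e (n + 1) k ≤ α ^ k * n.choose k * M := by
  refine le_pow_mul_of_recurrence hα hβ hM he0 hinit hstep (by simp) (by simp) fun n k => ?_
  rw [Nat.choose_succ_succ', Nat.cast_add]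
  linarith [mul_le_of_le_one_left (Nat.cast_nonneg (α := ℝ) (n.choose (k + 1))) hβ1]

theorem le_pow_mul_geom_sum_pow_of_recurrence {M : ℝ} (hα : 0 ≤ α) (hβ : 0 ≤ β)
    (hM : 0 ≤ M) (he0 : ∀ k, e 0 k = 0) (hinit : ∀ n < N, e (n + 1) 0 ≤ M)
    (hstep : ∀ n < N, ∀ k, e (n + 1) (k + 1) ≤ β * e n (k + 1) + α * e n k) :
    ∀ k, ∀ n < N, e (n + 1) k ≤ α ^ k * (∑ i ∈ Finset.range n, β ^ i) ^ k * M := by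
  refine le_pow_mul_of_recurrence hα hβ hM he0 hinit hstep (by simp) (by simp) fun n k => ?_
  set S := ∑ i ∈ Finset.range n, β ^ i
  have hS_mono : S ≤ ∑ i ∈ Finset.range (n + 1), β ^ i := by
    rw [Finset.sum_range_succ]
    exact le_add_of_nonneg_right (pow_nonneg hβ n)
  calc β * S ^ (k + 1) + S ^ k = S ^ k * (β * S + 1) := by ring
    _ = S ^ k * ∑ i ∈ Finset.range (n + 1), β ^ i := by rw [geom_sum_succ]
    _ ≤ (∑ i ∈ Finset.range (n + 1), β ^ i) ^ (k + 1) := by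
      rw [pow_succ]
      gcongr

theorem sup'_le_of_recurrence (hN : 1 ≤ N) (hα : 0 ≤ α) (hβ : 0 ≤ β) (hβ1 : β < 1)
    (he : ∀ n k, 0 ≤ e n k) (he0 : ∀ k, e 0 k = 0)
    (hstep : ∀ n < N, ∀ k, e (n + 1) (k + 1) ≤ β * e n (k + 1) + α * e n k) (k : ℕ) :
    (Finset.Icc 1 N).sup' (Finset.nonempty_Icc.mpr hN) (fun j => e j (k + 1)) ≤
      α ^ (k + 1) * min (((1 - β ^ (N - 1)) / (1 - β)) ^ (k + 1)) ((N - 1).choose (k + 1) : ℝ) *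
        (Finset.Icc 1 N).sup' (Finset.nonempty_Icc.mpr hN) (fun j => e j 0) := by
  set M := (Finset.Icc 1 N).sup' (Finset.nonempty_Icc.mpr hN) (fun j => e j 0)
  have hinit : ∀ n < N, e (n + 1) 0 ≤ M := fun n hn =>
    Finset.le_sup' (fun j => e j 0) (Finset.mem_Icc.2 ⟨by omega, hn⟩)
  have hM : 0 ≤ M := (he 1 0).trans (hinit 0 (by omega))
  have hgeom : ∑ i ∈ Finset.range (N - 1), β ^ i = (1 - β ^ (N - 1)) / (1 - β) := by
    rw [geom_sum_eq hβ1.ne, ← neg_div_neg_eq, neg_sub, neg_sub]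
  refine Finset.sup'_le _ _ fun j hj => ?_
  obtain ⟨n, rfl⟩ : ∃ n, j = n + 1 := ⟨j - 1, by grind⟩
  have hn : n < N := by grind
  rw [mul_min_of_nonneg _ _ (by positivity), min_mul_of_nonneg _ _ hM]
  refine le_min ?_ ?_
  · calc e (n + 1) (k + 1)
        ≤ α ^ (k + 1) * (∑ i ∈ Finset.range n, β ^ i) ^ (k + 1) * M :=
          le_pow_mul_geom_sum_pow_of_recurrence hα hβ hM he0 hinit hstep (k + 1) n hn
      _ ≤ α ^ (k + 1) * (∑ i ∈ Finset.range (N - 1), β ^ i) ^ (k + 1) * M := by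
          gcongr
          omega
      _ = _ := by rw [hgeom]
  · calc e (n + 1) (k + 1) ≤ α ^ (k + 1) * n.choose (k + 1) * M :=
          le_pow_mul_choose_of_recurrence hα hβ hβ1.le hM he0 hinit hstep (k + 1) n hn
      _ ≤ α ^ (k + 1) * (N - 1).choose (k + 1) * M := by
          gcongr
          omega

end Recurrence

theorem norm_sub_parareal_le {E : Type*} [SeminormedAddCommGroup E] {F G : E → E} {α β : ℝ}
    (hG : ∀ u v, ‖G u - G v‖ ≤ β * ‖u - v‖)
    (hF : ∀ u v, ‖(F u - G u) - (F v - G v)‖ ≤ α * ‖u - v‖) (x y z : E) :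
    ‖F x - (G y + F z - G z)‖ ≤ β * ‖x - y‖ + α * ‖x - z‖ := by
  calc ‖F x - (G y + F z - G z)‖ = ‖(G x - G y) + ((F x - G x) - (F z - G z))‖ := by
        congr 1; abel
    _ ≤ β * ‖x - y‖ + α * ‖x - z‖ := (norm_add_le _ _).trans (add_le_add (hG x y) (hF x z))

theorem parareal_error_le {E : Type*} [SeminormedAddCommGroup E] {F G : E → E} {α β : ℝ}
    (hα : 0 ≤ α) (hβ : 0 ≤ β) (hβ1 : β < 1) (hG : ∀ u v, ‖G u - G v‖ ≤ β * ‖u - v‖)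
    (hF : ∀ u v, ‖(F u - G u) - (F v - G v)‖ ≤ α * ‖u - v‖)
    {N : ℕ} (hN : 1 ≤ N) {Uf : ℕ → E} {U : ℕ → ℕ → E} (h0 : ∀ k, U 0 k = Uf 0)
    (hUf : ∀ n < N, Uf (n + 1) = F (Uf n))
    (hU : ∀ n < N, ∀ k, U (n + 1) (k + 1) = G (U n (k + 1)) + F (U n k) - G (U n k)) (k : ℕ) :
    (Finset.Icc 1 N).sup' (Finset.nonempty_Icc.mpr hN) (fun j => ‖Uf j - U j (k + 1)‖) ≤
      α ^ (k + 1) * min (((1 - β ^ (N - 1)) / (1 - β)) ^ (k + 1)) ((N - 1).choose (k + 1) : ℝ) *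
        (Finset.Icc 1 N).sup' (Finset.nonempty_Icc.mpr hN) (fun j => ‖Uf j - U j 0‖) := by
  refine sup'_le_of_recurrence (e := fun n k => ‖Uf n - U n k‖) hN hα hβ hβ1
    (fun _ _ => norm_nonneg _) (by simp [h0]) (fun n hn k => ?_) k
  rw [hUf n hn, hU n hn k]
  exact norm_sub_parareal_le hG hF _ _ _

theorem norm_act_sub_act_le {m : ℕ} (A : Matrix (Fin m) (Fin m) ℝ)
    (u v : EuclideanSpace ℝ (Fin m)) :
    ‖act A u - act A v‖ ≤ opNorm A * ‖u - v‖ := by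
  rw [act, act, ← map_sub]
  exact ContinuousLinearMap.le_opNorm _ _

theorem opNorm_pow_le_self {m : ℕ} {A : Matrix (Fin m) (Fin m) ℝ} (hA : opNorm A ≤ 1) {q : ℕ}
    (hq : 1 ≤ q) : opNorm (A ^ q) ≤ opNorm A := by
  rw [opNorm, map_pow]
  exact (norm_pow_le' _ hq).trans (pow_le_of_le_one (norm_nonneg _) hA (by omega))

theorem stmt18_general (h ΔT ε : ℝ) (hh : 0 < h) (hΔT : 0 < ΔT) (hε : 0 < ε)
    (m : ℕ) (q : ℕ) (hq : 1 ≤ q)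
    (F : EuclideanSpace ℝ (Fin m) → EuclideanSpace ℝ (Fin m))
    (C₂ : ℝ) (hC₂ : 0 ≤ C₂)
    (hLTE : ∀ U V, ‖(F U - act (Pmat m h ΔT ε 3 ^ q) U) - (F V - act (Pmat m h ΔT ε 3 ^ q) V)‖
      ≤ C₂ * ΔT ^ 2 * ‖U - V‖)
    (N : ℕ) (hN : 1 ≤ N)
    (u0 : EuclideanSpace ℝ (Fin m))
    (Uf : ℕ → EuclideanSpace ℝ (Fin m)) (U : ℕ → ℕ → EuclideanSpace ℝ (Fin m))
    (hUf0 : Uf 0 = u0)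
    (hUfrec : ∀ n < N, Uf (n + 1) = F (Uf n))
    (h0 : ∀ k, U 0 k = u0)
    (hrec : ∀ n < N, ∀ k, U (n + 1) (k + 1) =
      act (Pmat m h ΔT ε 3 ^ q) (U n (k + 1)) + F (U n k)
        - act (Pmat m h ΔT ε 3 ^ q) (U n k)) :
    ∀ k : ℕ,
      ((Finset.Icc 1 N).sup' (Finset.nonempty_Icc.mpr hN)
          fun j => ‖Uf j - U j (k + 1)‖) ≤
        (C₂ * ΔT ^ 2) ^ (k + 1) *
          min (((1 - opNorm (Pmat m h ΔT ε 3) ^ (N - 1)) /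
                  (1 - opNorm (Pmat m h ΔT ε 3))) ^ (k + 1))
              ((N - 1).choose (k + 1) : ℝ) *
          ((Finset.Icc 1 N).sup' (Finset.nonempty_Icc.mpr hN)
            fun j => ‖Uf j - U j 0‖) := by
  have hP := opNorm_Pmat_lt_one m hh.ne' hΔT hε.ne' 3
  have hG (u v : EuclideanSpace ℝ (Fin m)) :
      ‖act (Pmat m h ΔT ε 3 ^ q) u - act (Pmat m h ΔT ε 3 ^ q) v‖ ≤
        opNorm (Pmat m h ΔT ε 3) * ‖u - v‖ :=
    (norm_act_sub_act_le _ u v).trans (by gcongr; exact opNorm_pow_le_self hP.le hq)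
  exact parareal_error_le (by positivity) (norm_nonneg _) hP hG hLTE hN
    (fun k => (h0 k).trans hUf0.symm) hUfrec hrec

theorem stmt18 (h ΔT ε : ℝ) (hh : 0 < h) (hΔT : 0 < ΔT) (hε : 0 < ε)
    (m : ℕ) (hm : 1 ≤ m) (q : ℕ) (hq : 1 ≤ q)
    (F : EuclideanSpace ℝ (Fin m) → EuclideanSpace ℝ (Fin m))
    (C₂ : ℝ) (hC₂ : 0 ≤ C₂)
    (hLTE : ∀ U V, ‖(F U - act (Pmat m h ΔT ε 3 ^ q) U) - (F V - act (Pmat m h ΔT ε 3 ^ q) V)‖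
      ≤ C₂ * ΔT ^ 2 * ‖U - V‖)
    (N : ℕ) (hN : 1 ≤ N)
    (u0 : EuclideanSpace ℝ (Fin m))
    (Uf : ℕ → EuclideanSpace ℝ (Fin m)) (U : ℕ → ℕ → EuclideanSpace ℝ (Fin m))
    (hUf0 : Uf 0 = u0)
    (hUfrec : ∀ n < N, Uf (n + 1) = F (Uf n))
    (h0 : ∀ k, U 0 k = u0)
    (hrec : ∀ n < N, ∀ k, U (n + 1) (k + 1) =
      act (Pmat m h ΔT ε 3 ^ q) (U n (k + 1)) + F (U n k)
        - act (Pmat m h ΔT ε 3 ^ q) (U n k)) :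
    ∀ k : ℕ,
      ((Finset.Icc 1 N).sup' (Finset.nonempty_Icc.mpr hN)
          fun j => ‖Uf j - U j (k + 1)‖) ≤
        (C₂ * ΔT ^ 2) ^ (k + 1) *
          min (((1 - opNorm (Pmat m h ΔT ε 3) ^ (N - 1)) /
                  (1 - opNorm (Pmat m h ΔT ε 3))) ^ (k + 1))
              ((N - 1).choose (k + 1) : ℝ) *
          ((Finset.Icc 1 N).sup' (Finset.nonempty_Icc.mpr hN)
            fun j => ‖Uf j - U j 0‖) :=
  stmt18_general h ΔT ε hh hΔT hε m q hq F C₂ hC₂ hLTE N hN u0 Uf U hUf0 hUfrec h0 hrec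
end
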